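/- Let 2/3 < ν < 4/5 and let ν₋, ν₊ satisfy: ν₋, ν₊ > 0; 3ν/2 − 1 < ν₋ < ν/2; 0 < ν₊ < 1 − ν; ν₋ + ν₊ = 1 − ν. Define S_SG(ζ) := tan((ζ + iπν)/(2i))/tan((ζ − iπν)/(2i)), with g_a(ζ) := sinh((ζ − iπa)/2)/sinh((ζ + iπa)/2) define S_CDD(ζ) := g_{ν−ν₋}(ζ) g_{ν+ν₊}(ζ) g_{1−ν+ν₋}(ζ) g_{1−ν−ν₊}(ζ), set S^{11} := S_SG · S_CDD and S^{21}(ζ) := S^{11}(ζ + iπν/2)·S^{11}(ζ − iπν/2). Then the residues at the s-channel poles agree: the limit as ζ → iπ(1 − ν/2) of (ζ − iπ(1 − ν/2))·S^{21}(ζ) equals the limit as ζ → iπν of (ζ − iπν)·S^{11}(ζ) (i.e. R^{b₁}_{b₁b₂} = R^{b₂}_{b₁b₁}). -/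

import Mathlib

open Complex Filter Topology

/-- The sine-Gordon breather–breather (b₁b₁) scattering function. -/
noncomputable def SSG (ν : ℝ) (ζ : ℂ) : ℂ :=
  Complex.tan ((ζ + Complex.I * (Real.pi : ℂ) * (ν : ℂ)) / (2 * Complex.I)) /
  Complex.tan ((ζ - Complex.I * (Real.pi : ℂ) * (ν : ℂ)) / (2 * Complex.I))

/-- The elementary factor g_a(ζ) = sinh((ζ − iπa)/2)/sinh((ζ + iπa)/2). -/
noncomputable def gfac (a : ℝ) (ζ : ℂ) : ℂ :=
  Complex.sinh ((ζ - Complex.I * (Real.pi : ℂ) * (a : ℂ)) / 2) /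
  Complex.sinh ((ζ + Complex.I * (Real.pi : ℂ) * (a : ℂ)) / 2)

/-- The CDD factor S_CDD = g_{ν−ν₋} g_{ν+ν₊} g_{1−ν+ν₋} g_{1−ν−ν₊}. -/
noncomputable def SCDD (ν νm νp : ℝ) (ζ : ℂ) : ℂ :=
  gfac (ν - νm) ζ * gfac (ν + νp) ζ * gfac (1 - ν + νm) ζ * gfac (1 - ν - νp) ζ

/-- The deformed (b₁b₁) scattering function S¹¹ = S_SG·S_CDD. -/
noncomputable def S11 (ν νm νp : ℝ) (ζ : ℂ) : ℂ :=
  SSG ν ζ * SCDD ν νm νp ζ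

/-- The deformed (b₂b₁) scattering function S²¹(ζ) = S¹¹(ζ + iπν/2)·S¹¹(ζ − iπν/2). -/
noncomputable def S21 (ν νm νp : ℝ) (ζ : ℂ) : ℂ :=
  S11 ν νm νp (ζ + Complex.I * (Real.pi : ℂ) * (ν : ℂ) / 2) *
  S11 ν νm νp (ζ - Complex.I * (Real.pi : ℂ) * (ν : ℂ) / 2)

/-!
Near each pole `p` the function has the form `f ζ / tan ((ζ - p) / d)` with `f` continuous at `p`,
so `(ζ - p) · f ζ / tan ((ζ - p) / d) → d · f p`. For `S¹¹` at `iπν` this gives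
`2i · tan(πν) · S_CDD(iπν)`. For `S²¹` at `iπ(1 - ν/2)` the pole lies in the factor
`S¹¹(ζ - iπν/2)`, the other factor tends to `S¹¹(iπ) = -1`, and what is left is
`2i · tan(πν) · S_CDD(iπ(1 - ν))`. The two agree by the crossing symmetry
`S_CDD(iπ - ζ) = S_CDD(ζ)`: the CDD parameters come in pairs `a, 1 - a`, and
`g_{1-a}(ζ) = -g_a(iπ - ζ)`.
-/

open scoped Real

theorem tendsto_sub_mul_div_of_hasDerivAt {𝕜 : Type*} [NontriviallyNormedField 𝕜]
    {f h : 𝕜 → 𝕜} {p h' : 𝕜} (hf : ContinuousAt f p) (hh : HasDerivAt h h' p)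
    (hp : h p = 0) (hh' : h' ≠ 0) :
    Tendsto (fun z => (z - p) * (f z / h z)) (𝓝[≠] p) (𝓝 (f p / h')) := by
  refine ((hf.tendsto.mono_left nhdsWithin_le_nhds).div
    (hasDerivAt_iff_tendsto_slope.mp hh) hh').congr fun z => ?_
  rw [Pi.div_apply, slope_def_field, hp, sub_zero, div_div_eq_mul_div]
  ring

theorem hasDerivAt_tan_sub_div (p d : ℂ) :
    HasDerivAt (fun z => tan ((z - p) / d)) d⁻¹ p := by
  have := (hasDerivAt_tan (x := (p - p) / d) (by simp)).comp p
    (((hasDerivAt_id' p).sub_const p).div_const d)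
  simpa [Function.comp_def] using this

theorem tendsto_sub_mul_div_tan {f : ℂ → ℂ} {p d : ℂ} (hf : ContinuousAt f p) (hd : d ≠ 0) :
    Tendsto (fun z => (z - p) * (f z / tan ((z - p) / d))) (𝓝[≠] p) (𝓝 (f p * d)) := by
  simpa using tendsto_sub_mul_div_of_hasDerivAt hf (hasDerivAt_tan_sub_div p d) (by simp)
    (inv_ne_zero hd)

theorem sinh_pi_mul_I_sub (u : ℂ) : sinh (π * I - u) = sinh u := by
  rw [← neg_sub, sinh_neg, sinh_sub_pi_mul_I, neg_neg]

theorem gfac_one_sub (a : ℝ) (ζ : ℂ) : gfac (1 - a) ζ = -gfac a (I * π - ζ) := by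
  unfold gfac
  rw [show (I * π - ζ - I * π * a) / 2 = -((ζ - I * π * ((1 - a : ℝ) : ℂ)) / 2) by push_cast; ring,
    show (I * π - ζ + I * π * a) / 2 = π * I - (ζ + I * π * ((1 - a : ℝ) : ℂ)) / 2 by
      push_cast; ring,
    sinh_neg, sinh_pi_mul_I_sub, neg_div, neg_neg]

noncomputable def gfacPair (a : ℝ) (ζ : ℂ) : ℂ := gfac a ζ * gfac (1 - a) ζ

theorem gfacPair_crossing (a : ℝ) (ζ : ℂ) : gfacPair a (I * π - ζ) = gfacPair a ζ := by
  simp only [gfacPair, gfac_one_sub, sub_sub_cancel]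
  ring

theorem SCDD_eq_gfacPair_mul (ν νm νp : ℝ) (ζ : ℂ) :
    SCDD ν νm νp ζ = gfacPair (ν - νm) ζ * gfacPair (ν + νp) ζ := by
  rw [SCDD, gfacPair, gfacPair, show 1 - (ν - νm) = 1 - ν + νm by ring,
    show 1 - (ν + νp) = 1 - ν - νp by ring]
  ring

theorem SCDD_crossing (ν νm νp : ℝ) (ζ : ℂ) : SCDD ν νm νp (I * π - ζ) = SCDD ν νm νp ζ := by
  simp only [SCDD_eq_gfacPair_mul, gfacPair_crossing]

theorem sinh_I_mul_pi_add_ne_zero {x a : ℝ} (h₀ : 0 < x + a) (h₂ : x + a < 2) :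
    sinh ((I * π * x + I * π * a) / 2) ≠ 0 := by
  have hsin : Real.sin (π * (x + a) / 2) ≠ 0 :=
    (Real.sin_pos_of_pos_of_lt_pi (by positivity) (by nlinarith [Real.pi_pos])).ne'
  rw [show (I * π * x + I * π * a) / 2 = ((π * (x + a) / 2 : ℝ) : ℂ) * I by push_cast; ring,
    sinh_mul_I, ← ofReal_sin]
  exact mul_ne_zero (ofReal_ne_zero.2 hsin) I_ne_zero

theorem continuousAt_gfac {a x : ℝ} (h₀ : 0 < x + a) (h₂ : x + a < 2) :
    ContinuousAt (gfac a) (I * π * x) :=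
  ContinuousAt.div (by fun_prop) (by fun_prop) (sinh_I_mul_pi_add_ne_zero h₀ h₂)

theorem gfac_zero {a : ℝ} (h₀ : 0 < a) (h₂ : a < 2) : gfac a 0 = -1 := by
  have h := sinh_I_mul_pi_add_ne_zero (x := 0) (by linarith) (by linarith)
  simp only [ofReal_zero, mul_zero, zero_add] at h
  rw [gfac, zero_sub, zero_add, neg_div, sinh_neg, neg_div, div_self h]

theorem continuousAt_gfacPair {a x : ℝ} (ha : a ∈ Set.Ioo 0 1) (hx : x ∈ Set.Icc 0 1) :
    ContinuousAt (gfacPair a) (I * π * x) :=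
  (continuousAt_gfac (by linarith [ha.1, hx.1]) (by linarith [ha.2, hx.2])).mul
    (continuousAt_gfac (by linarith [ha.2, hx.1]) (by linarith [ha.1, hx.2]))

theorem gfacPair_zero {a : ℝ} (ha : a ∈ Set.Ioo 0 1) : gfacPair a 0 = 1 := by
  rw [gfacPair, gfac_zero ha.1 (by linarith [ha.2]),
    gfac_zero (by linarith [ha.2]) (by linarith [ha.1])]
  norm_num

theorem continuousAt_SCDD {ν νm νp x : ℝ} (ha : ν - νm ∈ Set.Ioo 0 1)
    (hb : ν + νp ∈ Set.Ioo 0 1) (hx : x ∈ Set.Icc 0 1) :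
    ContinuousAt (SCDD ν νm νp) (I * π * x) := by
  simp only [funext (SCDD_eq_gfacPair_mul ν νm νp)]
  exact (continuousAt_gfacPair ha hx).mul (continuousAt_gfacPair hb hx)

theorem SCDD_I_mul_pi {ν νm νp : ℝ} (ha : ν - νm ∈ Set.Ioo 0 1) (hb : ν + νp ∈ Set.Ioo 0 1) :
    SCDD ν νm νp (I * π) = 1 := by
  rw [← sub_zero (I * π), SCDD_crossing, SCDD_eq_gfacPair_mul, gfacPair_zero ha,
    gfacPair_zero hb, one_mul]

theorem tan_pi_mul_ne_zero {ν : ℝ} (hν : ν ∈ Set.Ioo (1 / 2) 1) : tan (π * ν) ≠ 0 := by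
  have h : Real.tan (π * ν) ≠ 0 := by
    rw [Real.tan_eq_sin_div_cos]
    refine div_ne_zero (Real.sin_pos_of_pos_of_lt_pi ?_ ?_).ne'
      (Real.cos_neg_of_pi_div_two_lt_of_lt ?_ ?_).ne <;> nlinarith [Real.pi_pos, hν.1, hν.2]
  exact_mod_cast h

theorem tan_pi_mul_div_two_ne_zero {ν : ℝ} (hν : ν ∈ Set.Ioo 0 1) : tan (π * ν / 2) ≠ 0 := by
  have h : Real.tan (π * ν / 2) ≠ 0 :=
    (Real.tan_pos_of_pos_of_lt_pi_div_two (by nlinarith [Real.pi_pos, hν.1])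
      (by nlinarith [Real.pi_pos, hν.2])).ne'
  exact_mod_cast h

theorem I_mul_pi_add_div (ν : ℝ) : (I * π + I * π * ν) / (2 * I) = π / 2 - -(π * ν / 2) := by
  field_simp
  ring

theorem I_mul_pi_sub_div (ν : ℝ) : (I * π - I * π * ν) / (2 * I) = π / 2 - π * ν / 2 := by
  field_simp

theorem SSG_I_mul_pi {ν : ℝ} (hν : ν ∈ Set.Ioo 0 1) : SSG ν (I * π) = -1 := by
  rw [SSG, I_mul_pi_add_div, I_mul_pi_sub_div, tan_pi_div_two_sub, tan_pi_div_two_sub, tan_neg,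
    inv_neg, neg_div, div_self (inv_ne_zero (tan_pi_mul_div_two_ne_zero hν))]

theorem continuousAt_S11_I_mul_pi {ν νm νp : ℝ} (hν : ν ∈ Set.Ioo 0 1)
    (ha : ν - νm ∈ Set.Ioo 0 1) (hb : ν + νp ∈ Set.Ioo 0 1) :
    ContinuousAt (S11 ν νm νp) (I * π) := by
  have htan := tan_pi_mul_div_two_ne_zero hν
  obtain ⟨hsin, -⟩ := div_ne_zero_iff.mp (tan_eq_sin_div_cos _ ▸ htan)
  have hSCDD : ContinuousAt (SCDD ν νm νp) (I * π) := by
    simpa using continuousAt_SCDD ha hb (x := 1) ⟨zero_le_one, le_rfl⟩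
  refine ContinuousAt.mul (ContinuousAt.div ?_ ?_ ?_) hSCDD
  · refine (continuousAt_tan.2 ?_).comp (f := fun ζ => (ζ + I * π * ν) / (2 * I)) (by fun_prop)
    rw [I_mul_pi_add_div, cos_pi_div_two_sub, sin_neg]
    exact neg_ne_zero.2 hsin
  · refine (continuousAt_tan.2 ?_).comp (f := fun ζ => (ζ - I * π * ν) / (2 * I)) (by fun_prop)
    rw [I_mul_pi_sub_div, cos_pi_div_two_sub]
    exact hsin
  · rw [I_mul_pi_sub_div, tan_pi_div_two_sub]
    exact inv_ne_zero htan

theorem tendsto_residue_S11 {ν νm νp : ℝ} (hν : ν ∈ Set.Ioo (1 / 2) 1)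
    (ha : ν - νm ∈ Set.Ioo 0 1) (hb : ν + νp ∈ Set.Ioo 0 1) :
    Tendsto (fun ζ => (ζ - I * π * ν) * S11 ν νm νp ζ) (𝓝[≠] (I * π * ν))
      (𝓝 (tan (π * ν) * SCDD ν νm νp (I * π * ν) * (2 * I))) := by
  have hpole : (I * π * ν + I * π * ν) / (2 * I) = π * ν := by
    field_simp
    ring
  have hcos := (div_ne_zero_iff.mp (tan_eq_sin_div_cos _ ▸ tan_pi_mul_ne_zero hν)).2
  have hf : ContinuousAt (fun ζ => tan ((ζ + I * π * ν) / (2 * I)) * SCDD ν νm νp ζ)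
      (I * π * ν) := by
    refine ContinuousAt.mul ?_ (continuousAt_SCDD ha hb ⟨by linarith [hν.1], hν.2.le⟩)
    exact (continuousAt_tan.2 (hpole ▸ hcos)).comp
      (f := fun ζ => (ζ + I * π * ν) / (2 * I)) (by fun_prop)
  convert tendsto_sub_mul_div_tan hf (mul_ne_zero two_ne_zero I_ne_zero) using 2
  · simp only [S11, SSG]
    ring
  · rw [hpole]

theorem tendsto_residue_S21 {ν νm νp : ℝ} (hν : ν ∈ Set.Ioo (1 / 2) 1)
    (ha : ν - νm ∈ Set.Ioo 0 1) (hb : ν + νp ∈ Set.Ioo 0 1) :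
    Tendsto (fun ζ => (ζ - I * π * ((1 - ν / 2 : ℝ) : ℂ)) * S21 ν νm νp ζ)
      (𝓝[≠] (I * π * ((1 - ν / 2 : ℝ) : ℂ)))
      (𝓝 (tan (π * ν) * SCDD ν νm νp (I * π * ν) * (2 * I))) := by
  set p : ℂ := I * π * ((1 - ν / 2 : ℝ) : ℂ)
  set c : ℂ := I * π * ν / 2 with hc
  have hpc : p + c = I * π := by
    simp only [p, c]
    push_cast
    ring
  have hmc : p - c = I * π * ((1 - ν : ℝ) : ℂ) := by
    simp only [p, c]
    push_cast
    ring
  have hB : (p - c - I * π * ν) / (2 * I) = π / 2 - π * ν := by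
    simp only [p, c]
    field_simp
    push_cast
    ring
  -- `S11 (ζ - c)` has its pole at `ζ = p` in the numerator `tan (π / 2 + ⋯)` of `SSG`
  have hsing (ζ : ℂ) :
      tan ((ζ - c + I * π * ν) / (2 * I)) = (tan ((ζ - p) / -(2 * I)))⁻¹ := by
    rw [← tan_pi_div_two_sub]
    congr 1
    simp only [p, c]
    field_simp
    push_cast
    ring
  have htan := tan_pi_mul_ne_zero hν
  have hsin := (div_ne_zero_iff.mp (tan_eq_sin_div_cos _ ▸ htan)).1
  have hf : ContinuousAt
      (fun ζ => S11 ν νm νp (ζ + c) * SCDD ν νm νp (ζ - c) / tan ((ζ - c - I * π * ν) / (2 * I)))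
      p := by
    refine ContinuousAt.div (ContinuousAt.mul ?_ ?_) ?_ ?_
    · exact ContinuousAt.comp (g := S11 ν νm νp)
        (hpc ▸ continuousAt_S11_I_mul_pi ⟨by linarith [hν.1], hν.2⟩ ha hb) (by fun_prop)
    · exact ContinuousAt.comp (g := SCDD ν νm νp)
        (hmc ▸ continuousAt_SCDD ha hb ⟨by linarith [hν.2], by linarith [hν.1]⟩) (by fun_prop)
    · refine (continuousAt_tan.2 ?_).comp
        (f := fun ζ => (ζ - c - I * π * ν) / (2 * I)) (by fun_prop)
      rw [hB, cos_pi_div_two_sub]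
      exact hsin
    · rw [hB, tan_pi_div_two_sub]
      exact inv_ne_zero htan
  convert tendsto_sub_mul_div_tan hf (neg_ne_zero.2 (mul_ne_zero two_ne_zero I_ne_zero))
    using 2 with ζ
  · rw [S21, ← hc, S11, S11, SSG, SSG, hsing]
    ring
  · rw [hB, hpc, hmc, tan_pi_div_two_sub, S11, SSG_I_mul_pi ⟨by linarith [hν.1], hν.2⟩,
      SCDD_I_mul_pi ha hb, show I * π * ((1 - ν : ℝ) : ℂ) = I * π - I * π * ν by push_cast; ring,
      SCDD_crossing, div_inv_eq_mul]
    ring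

theorem residues_agree_general (ν : ℝ) (h1 : 2/3 < ν)
    (νm νp : ℝ) (hm : 0 < νm) (hp : 0 < νp)
    (hm2 : νm < ν/2)
    (hp1 : νp < 1 - ν) :
    ∃ R : ℂ,
      Filter.Tendsto
        (fun ζ : ℂ => (ζ - Complex.I * (Real.pi : ℂ) * ((1 - ν/2 : ℝ) : ℂ)) * S21 ν νm νp ζ)
        (𝓝[≠] (Complex.I * (Real.pi : ℂ) * ((1 - ν/2 : ℝ) : ℂ))) (𝓝 R) ∧
      Filter.Tendsto
        (fun ζ : ℂ => (ζ - Complex.I * (Real.pi : ℂ) * (ν : ℂ)) * S11 ν νm νp ζ)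
        (𝓝[≠] (Complex.I * (Real.pi : ℂ) * (ν : ℂ))) (𝓝 R) := by
  have hν : ν ∈ Set.Ioo (1 / 2) 1 := ⟨by linarith, by linarith⟩
  have ha : ν - νm ∈ Set.Ioo 0 1 := ⟨by linarith, by linarith⟩
  have hb : ν + νp ∈ Set.Ioo 0 1 := ⟨by linarith, by linarith⟩
  exact ⟨_, tendsto_residue_S21 hν ha hb, tendsto_residue_S11 hν ha hb⟩

/-- the residue of S²¹ at its s-channel pole iπ(1 − ν/2) equals the
residue of S¹¹ at its s-channel pole iπν (both taken as limits of (ζ − p)·f(ζ)):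
R^{b₁}_{b₁b₂} = R^{b₂}_{b₁b₁}. -/
theorem residues_agree (ν : ℝ) (h1 : 2/3 < ν) (h2 : ν < 4/5)
    (νm νp : ℝ) (hm : 0 < νm) (hp : 0 < νp)
    (hm1 : 3*ν/2 - 1 < νm) (hm2 : νm < ν/2)
    (hp1 : νp < 1 - ν) (hsum : νm + νp = 1 - ν) :
    ∃ R : ℂ,
      Filter.Tendsto
        (fun ζ : ℂ => (ζ - Complex.I * (Real.pi : ℂ) * ((1 - ν/2 : ℝ) : ℂ)) * S21 ν νm νp ζ)
        (𝓝[≠] (Complex.I * (Real.pi : ℂ) * ((1 - ν/2 : ℝ) : ℂ))) (𝓝 R) ∧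
      Filter.Tendsto
        (fun ζ : ℂ => (ζ - Complex.I * (Real.pi : ℂ) * (ν : ℂ)) * S11 ν νm νp ζ)
        (𝓝[≠] (Complex.I * (Real.pi : ℂ) * (ν : ℂ))) (𝓝 R) :=
  residues_agree_general ν h1 νm νp hm hp hm2 hp1
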